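/- Sufficient Depth (Proposition 1, satisfiability form). Let S, U, A be finite types with card U ≤ u_max, let R : S → S → Prop, let D be the ground-truth DFA with alphabet S, node type U and start node u_I, and let π : S → U → A → ℝ be a product policy with induced history policy π_h. Set l* = card S * u_max * u_max. Then there exists a candidate DFA D̂ with alphabet S, node type Fin u_max, and some start node that is consistent at depth l*, if and only if for every l > l* there exists such a candidate DFA consistent at depth l. -/

import Mathlib

/-- The history policy induced by a product policy `π` and a labeled reward machine
model (DFA) `D` with start node `uI`: `π_h(a | s, τ) = π s (D.evalFrom uI τ) a`. -/
def historyPolicy {S U A : Type*} (D : DFA S U) (uI : U) (π : S → U → A → ℝ)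
    (a : A) (s : S) (τ : List S) : ℝ :=
  π s (D.evalFrom uI τ) a

/-- A pair of feasible (R-chain) trajectories is a negative example for the history
policy `πh` if `πh` differs on them at some state-action pair. -/
def NegativeExample {S A : Type*} (R : S → S → Prop) (πh : A → S → List S → ℝ)
    (τ τ' : List S) : Prop :=
  List.Chain' R τ ∧ List.Chain' R τ' ∧ ∃ (s : S) (a : A), πh a s τ ≠ πh a s τ'

/-- A candidate DFA `Dhat` with start node `uIhat` is consistent at depth `l` if every
negative example of length at most `l` leads to distinct nodes of `Dhat`. -/
def ConsistentAtDepth {S A Uhat : Type*} (R : S → S → Prop) (πh : A → S → List S → ℝ)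
    (Dhat : DFA S Uhat) (uIhat : Uhat) (l : ℕ) : Prop :=
  ∀ τ τ' : List S, NegativeExample R πh τ τ' → τ.length ≤ l → τ'.length ≤ l →
    Dhat.evalFrom uIhat τ ≠ Dhat.evalFrom uIhat τ'


section Aux

variable {S U : Type*} {u_max : ℕ}

/-- Product automaton tracking (last symbol, state of D, state of Dhat). -/
def prodDFA (D : DFA S U) (uI : U) (Dhat : DFA S (Fin u_max)) (uIhat : Fin u_max) :
    DFA S (Option (S × U × Fin u_max)) where
  step q s := some (s,
    D.step ((q.map fun p => p.2.1).getD uI) s,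
    Dhat.step ((q.map fun p => p.2.2).getD uIhat) s)
  start := none
  accept := ∅

lemma prodDFA_projU (D : DFA S U) (uI : U) (Dhat : DFA S (Fin u_max)) (uIhat : Fin u_max) :
    ∀ (x : List S) (q : Option (S × U × Fin u_max)),
      (((prodDFA D uI Dhat uIhat).evalFrom q x).map fun p => p.2.1).getD uI
        = D.evalFrom ((q.map fun p => p.2.1).getD uI) x := by
  intro x
  induction x with
  | nil => intro q; rfl
  | cons a x ih =>
    intro q
    show (((prodDFA D uI Dhat uIhat).evalFrom ((prodDFA D uI Dhat uIhat).step q a) x).map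
        fun p => p.2.1).getD uI = _
    rw [ih]
    rfl

lemma prodDFA_projV (D : DFA S U) (uI : U) (Dhat : DFA S (Fin u_max)) (uIhat : Fin u_max) :
    ∀ (x : List S) (q : Option (S × U × Fin u_max)),
      (((prodDFA D uI Dhat uIhat).evalFrom q x).map fun p => p.2.2).getD uIhat
        = Dhat.evalFrom ((q.map fun p => p.2.2).getD uIhat) x := by
  intro x
  induction x with
  | nil => intro q; rfl
  | cons a x ih =>
    intro q
    show (((prodDFA D uI Dhat uIhat).evalFrom ((prodDFA D uI Dhat uIhat).step q a) x).map
        fun p => p.2.2).getD uIhat = _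
    rw [ih]
    rfl

lemma prodDFA_projS (D : DFA S U) (uI : U) (Dhat : DFA S (Fin u_max)) (uIhat : Fin u_max)
    (x : List S) (q : Option (S × U × Fin u_max)) (hx : x ≠ []) :
    ((prodDFA D uI Dhat uIhat).evalFrom q x).map Prod.fst = x.getLast? := by
  obtain ⟨y, a, rfl⟩ := List.eq_nil_or_concat x |>.resolve_left hx
  rw [List.concat_eq_append, DFA.evalFrom_append_singleton, List.getLast?_concat]
  rfl

end Aux

lemma shorten {S U : Type*} [Fintype S] [Fintype U] {u_max : ℕ}
    (hU : Fintype.card U ≤ u_max) (R : S → S → Prop) (D : DFA S U) (uI : U)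
    (Dhat : DFA S (Fin u_max)) (uIhat : Fin u_max) :
    ∀ τ : List S, List.Chain' R τ →
      ∃ σ : List S, List.Chain' R σ ∧ σ.length ≤ Fintype.card S * u_max * u_max ∧
        D.evalFrom uI σ = D.evalFrom uI τ ∧ Dhat.evalFrom uIhat σ = Dhat.evalFrom uIhat τ := by
  set P := prodDFA D uI Dhat uIhat with hP
  suffices h : ∀ n (τ : List S), τ.length ≤ n → List.Chain' R τ →
      ∃ σ : List S, List.Chain' R σ ∧ σ.length ≤ Fintype.card S * u_max * u_max ∧
        D.evalFrom uI σ = D.evalFrom uI τ ∧ Dhat.evalFrom uIhat σ = Dhat.evalFrom uIhat τ by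
    intro τ hch; exact h τ.length τ le_rfl hch
  intro n
  induction n with
  | zero =>
    intro τ hlen hch
    exact ⟨τ, hch, by omega, rfl, rfl⟩
  | succ n ih =>
    intro τ hlen hch
    by_cases hle : τ.length ≤ Fintype.card S * u_max * u_max
    · exact ⟨τ, hch, hle, rfl, rfl⟩
    push_neg at hle
    have hcard : Fintype.card (Option (S × U × Fin u_max)) ≤ τ.length := by
      have h1 : Fintype.card (Option (S × U × Fin u_max))
          = Fintype.card S * (Fintype.card U * u_max) + 1 := by
        simp [Fintype.card_option, Fintype.card_prod]
      have h2 : Fintype.card S * (Fintype.card U * u_max)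
          ≤ Fintype.card S * u_max * u_max := by
        rw [mul_assoc]
        exact Nat.mul_le_mul_left _ (Nat.mul_le_mul_right _ hU)
      omega
    obtain ⟨q, a, b, c, hx, hlen2, hb, ha, hqb, hqc⟩ :=
      P.evalFrom_split (s := none) (t := P.evalFrom none τ) hcard rfl
    -- last of b via projS
    have hlb : q.map Prod.fst = b.getLast? := by
      have := prodDFA_projS D uI Dhat uIhat b q hb
      rw [hqb] at this; exact this
    -- a ≠ []
    have hane : a ≠ [] := by
      intro h0
      rw [h0] at ha
      simp only [DFA.evalFrom_nil] at ha
      rw [← ha] at hlb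
      obtain ⟨y, s0, rfl⟩ := (List.eq_nil_or_concat b).resolve_left hb
      rw [List.concat_eq_append, List.getLast?_concat] at hlb
      simp at hlb
    have hla : a.getLast? = b.getLast? := by
      have := prodDFA_projS D uI Dhat uIhat a none hane
      rw [ha] at this
      rw [← this, ← hlb]
    -- chain of a ++ c
    rw [List.append_assoc] at hx
    rw [hx, List.Chain', List.isChain_append] at hch
    obtain ⟨hca, hcbc, H1⟩ := hch
    rw [List.isChain_append] at hcbc
    obtain ⟨hcb, hcc, H2⟩ := hcbc
    have hchain : List.Chain' R (a ++ c) := by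
      rw [List.Chain', List.isChain_append]
      refine ⟨hca, hcc, fun x hx' y hy' => H2 x ?_ y hy'⟩
      rw [← hla]; exact hx'
    -- evals agree on the product automaton
    have heval : P.evalFrom none (a ++ c) = P.evalFrom none τ := by
      have r : P.evalFrom none τ = P.evalFrom q c := by
        rw [hx, DFA.evalFrom_of_append, ha, DFA.evalFrom_of_append, hqb]
      rw [r, DFA.evalFrom_of_append, ha]
    have hevU : D.evalFrom uI (a ++ c) = D.evalFrom uI τ := by
      have e1 := prodDFA_projU D uI Dhat uIhat (a ++ c) none
      have e2 := prodDFA_projU D uI Dhat uIhat τ none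
      rw [← hP] at e1 e2
      rw [heval] at e1
      simpa using e1.symm.trans e2
    have hevV : Dhat.evalFrom uIhat (a ++ c) = Dhat.evalFrom uIhat τ := by
      have e1 := prodDFA_projV D uI Dhat uIhat (a ++ c) none
      have e2 := prodDFA_projV D uI Dhat uIhat τ none
      rw [← hP] at e1 e2
      rw [heval] at e1
      simpa using e1.symm.trans e2
    -- recurse
    have hlt : (a ++ c).length ≤ n := by
      have : τ.length = a.length + (b.length + c.length) := by rw [hx]; simp
      have hb1 : 1 ≤ b.length := List.length_pos_iff.mpr hb
      simp only [List.length_append]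
      omega
    obtain ⟨σ, h1, h2, h3, h4⟩ := ih (a ++ c) hlt hchain
    exact ⟨σ, h1, h2, h3.trans hevU, h4.trans hevV⟩


/-- Proposition 1 (Sufficient Depth), satisfiability form: there exists a candidate
labeled reward machine model with at most `u_max` nodes that is consistent at depth
`l* = |S| * u_max * u_max` if and only if for every depth `l > l*` there exists such a
candidate consistent at depth `l`. -/
theorem sufficient_depth_satisfiability_form {S U A : Type*}
    [Fintype S] [Fintype U] (u_max : ℕ) (hU : Fintype.card U ≤ u_max)
    (R : S → S → Prop) (D : DFA S U) (uI : U) (π : S → U → A → ℝ) :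
    (∃ (Dhat : DFA S (Fin u_max)) (uIhat : Fin u_max),
        ConsistentAtDepth R (historyPolicy D uI π) Dhat uIhat
          (Fintype.card S * u_max * u_max)) ↔
    (∀ l : ℕ, l > Fintype.card S * u_max * u_max →
      ∃ (Dhat : DFA S (Fin u_max)) (uIhat : Fin u_max),
        ConsistentAtDepth R (historyPolicy D uI π) Dhat uIhat l) := by
  constructor
  · rintro ⟨Dhat, uIhat, hcons⟩ l _
    refine ⟨Dhat, uIhat, fun τ τ' hneg h1 h2 => ?_⟩
    obtain ⟨hc, hc', s, a, hne⟩ := hneg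
    obtain ⟨σ, hσc, hσl, hσU, hσV⟩ := shorten hU R D uI Dhat uIhat τ hc
    obtain ⟨σ', hσ'c, hσ'l, hσ'U, hσ'V⟩ := shorten hU R D uI Dhat uIhat τ' hc'
    have hneg' : NegativeExample R (historyPolicy D uI π) σ σ' := by
      refine ⟨hσc, hσ'c, s, a, ?_⟩
      simpa only [historyPolicy, hσU, hσ'U] using hne
    have := hcons σ σ' hneg' hσl hσ'l
    rw [hσV, hσ'V] at this
    exact this
  · intro h
    obtain ⟨Dhat, uIhat, hcons⟩ := h (Fintype.card S * u_max * u_max + 1) (by omega)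
    exact ⟨Dhat, uIhat, fun τ τ' hneg h1 h2 =>
      hcons τ τ' hneg (h1.trans (Nat.le_succ _)) (h2.trans (Nat.le_succ _))⟩
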